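/- arXiv:1407.6283 — 2 statements merged into one kernel-verified Lean document; each statement's English description precedes it below -/
import Mathlib

section
/- If Π̃ = 𝔘̂, then every identity Y-sequence d ∈ Υ belongs to WDom_Υ(𝔘). -/
universe u

namespace Wh

variable {X : Type u}

/-- The set of symbols `(ᵘr)^ε` for a presentation with relators `rels`:
`u` is a word of the free group, `r` a relator and `eps` the sign (`true` for `+1`). -/
structure Sym (X : Type u) (rels : Set (FreeGroup X)) where
  u : FreeGroup X
  r : rels
  eps : Bool

variable {rels : Set (FreeGroup X)}

/-- The formal inverse `(ᵘr)^{-ε}` of a symbol `(ᵘr)^ε`. -/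
def Sym.symInv (a : Sym X rels) : Sym X rels := ⟨a.u, a.r, !a.eps⟩

/-- `θ((ᵘr)^ε) = u r^ε u⁻¹`. -/
def Sym.theta (a : Sym X rels) : FreeGroup X :=
  a.u * (if a.eps then (a.r : FreeGroup X) else (a.r : FreeGroup X)⁻¹) * a.u⁻¹

/-- The conjugate `ᵛ((ᵘr)^ε) = (^{vu}r)^ε`. -/
def Sym.conj (v : FreeGroup X) (a : Sym X rels) : Sym X rels := ⟨v * a.u, a.r, a.eps⟩

/-- The defining relations of the monoid `Υ` : `a ⬝ b = (^{θ(a)}b) ⬝ a`. -/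
def upsRel (rels : Set (FreeGroup X)) :
    FreeMonoid (Sym X rels) → FreeMonoid (Sym X rels) → Prop := fun x y =>
  ∃ a b : Sym X rels, x = FreeMonoid.of a * FreeMonoid.of b ∧
    y = FreeMonoid.of (Sym.conj (Sym.theta a) b) * FreeMonoid.of a

/-- The congruence on the free monoid on `Z` generated by the defining relations of `Υ`. -/
def upsCon (rels : Set (FreeGroup X)) : Con (FreeMonoid (Sym X rels)) := conGen (upsRel rels)

/-- The monoid `Υ` presented on `Z` by the relations `a ⬝ b = (^{θ(a)}b) ⬝ a`. -/
abbrev Ups (rels : Set (FreeGroup X)) := (upsCon rels).Quotient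

/-- The canonical epimorphism `σ : FM(Z) → Υ`. -/
def sigma (rels : Set (FreeGroup X)) : FreeMonoid (Sym X rels) →* Ups rels := (upsCon rels).mk'

/-- The submonoid `𝔘` of `Υ` generated by the elements `σ(a)σ(a⁻¹)`, `a ∈ Z`. -/
def UU (rels : Set (FreeGroup X)) : Submonoid (Ups rels) :=
  Submonoid.closure
    {x | ∃ a : Sym X rels, x = sigma rels (FreeMonoid.of a * FreeMonoid.of a.symInv)}

/-- The monoid homomorphism `θ̄ : Υ → F` induced by `θ`. -/
def thetaBar (rels : Set (FreeGroup X)) : Ups rels →* FreeGroup X :=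
  (upsCon rels).lift (FreeMonoid.lift Sym.theta) (by
    apply Con.conGen_le.2
    rintro x y ⟨a, b, rfl, rfl⟩
    simp only [Con.ker_rel, map_mul, FreeMonoid.lift_eval_of]
    simp only [Sym.theta, Sym.conj]
    group)

/-- The relators of the group `𝒢(Υ)` : `a ⬝ b ⬝ ι((^{θ(a)}b) ⬝ a)`. -/
def grels (rels : Set (FreeGroup X)) : Set (FreeGroup (Sym X rels)) :=
  {x | ∃ a b : Sym X rels, x = FreeGroup.of a * FreeGroup.of b *
      (FreeGroup.of (Sym.conj (Sym.theta a) b) * FreeGroup.of a)⁻¹}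

/-- The universal enveloping group `𝒢(Υ)`. -/
abbrev GUps (rels : Set (FreeGroup X)) := PresentedGroup (grels rels)

/-- The canonical monoid homomorphism `μ : Υ → 𝒢(Υ)`. -/
def mu (rels : Set (FreeGroup X)) : Ups rels →* GUps rels :=
  (upsCon rels).lift (FreeMonoid.lift fun a => (PresentedGroup.of a : GUps rels)) (by
    apply Con.conGen_le.2
    rintro x y ⟨a, b, rfl, rfl⟩
    simp only [Con.ker_rel, map_mul, FreeMonoid.lift_eval_of]
    have h2 : (QuotientGroup.mk (FreeGroup.of a * FreeGroup.of b *
        (FreeGroup.of (Sym.conj (Sym.theta a) b) * FreeGroup.of a)⁻¹) : GUps rels) = 1 :=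
      (QuotientGroup.eq_one_iff _).2 (Subgroup.subset_normalClosure ⟨a, b, rfl⟩)
    rw [QuotientGroup.mk_mul, QuotientGroup.mk_inv, QuotientGroup.mk_mul,
      QuotientGroup.mk_mul, mul_inv_eq_one] at h2
    exact h2)

/-- The subgroup `𝔘̂` of `𝒢(Υ)` generated by `μ(𝔘)`. -/
def UUhat (rels : Set (FreeGroup X)) : Subgroup (GUps rels) :=
  Subgroup.closure (mu rels '' (UU rels : Set (Ups rels)))

/-- The group homomorphism `θ̃ : 𝒢(Υ) → F` induced by `θ`. -/
def thetaTilde (rels : Set (FreeGroup X)) : GUps rels →* FreeGroup X :=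
  PresentedGroup.toGroup (f := Sym.theta) (by
    rintro x ⟨a, b, rfl⟩
    simp only [map_mul, map_inv, FreeGroup.lift_apply_of]
    simp only [Sym.theta, Sym.conj]
    group)

/-- Peiffer equivalence `~_𝔘` on `Υ` : the equivalence relation generated by the pairs
`(x, x ⬝ σ(a)σ(a⁻¹))`. -/
def peifferEquiv (rels : Set (FreeGroup X)) : Ups rels → Ups rels → Prop :=
  Relation.EqvGen fun x y => ∃ a : Sym X rels,
    y = x * sigma rels (FreeMonoid.of a * FreeMonoid.of a.symInv)

/-- The weak dominion of a submonoid `U` of a monoid `S`. -/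
def WDom (S : Type u) [Monoid S] (U : Submonoid S) : Set S :=
  {d | ∀ (G : Type u) [Group G] (f g : S →* G), (∀ u ∈ U, f u = g u) → f d = g d}

/-- The `F`-action on `𝒢(Υ)` determined by `ʷ(μσ(a)) = μσ(ʷa)`. -/
def actF (rels : Set (FreeGroup X)) (w : FreeGroup X) : GUps rels →* GUps rels :=
  PresentedGroup.toGroup (f := fun a => (PresentedGroup.of (Sym.conj w a) : GUps rels)) (by
    rintro x ⟨a, b, rfl⟩
    simp only [map_mul, map_inv, FreeGroup.lift_apply_of]
    have key : Sym.conj w (Sym.conj (Sym.theta a) b) =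
        Sym.conj (Sym.theta (Sym.conj w a)) (Sym.conj w b) := by
      rcases a with ⟨u, r, e⟩
      cases e <;> simp [Sym.conj, Sym.theta, mul_assoc]
    rw [key]
    have h2 : (QuotientGroup.mk (FreeGroup.of (Sym.conj w a) * FreeGroup.of (Sym.conj w b) *
        (FreeGroup.of (Sym.conj (Sym.theta (Sym.conj w a)) (Sym.conj w b)) *
          FreeGroup.of (Sym.conj w a))⁻¹) : GUps rels) = 1 :=
      (QuotientGroup.eq_one_iff _).2 (Subgroup.subset_normalClosure ⟨_, _, rfl⟩)
    rw [QuotientGroup.mk_mul, QuotientGroup.mk_inv, QuotientGroup.mk_mul,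
      QuotientGroup.mk_mul] at h2
    exact h2)

/-!
Every homomorphism from `Υ` to a group factors through `μ : Υ → 𝒢(Υ)`. Two such homomorphisms
that agree on `𝔘` therefore extend to homomorphisms on `𝒢(Υ)` that agree on `𝔘̂`. For an identity
`Y`-sequence `d`, `μ(d)` lies in `Π̃ = 𝔘̂` because `θ̃ ∘ μ = θ̄`, so both homomorphisms take the
same value at `d`.
-/

theorem mem_WDom_of_mem_closure_image {S : Type u} [Monoid S] {H : Type*} [Group H]
    (μ : S →* H) (hμ : ∀ (G : Type u) [Group G] (f : S →* G), ∃ f' : H →* G, f'.comp μ = f)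
    (U : Submonoid S) {d : S} (hd : μ d ∈ Subgroup.closure (μ '' U)) : d ∈ WDom S U := by
  intro G _ f g hfg
  obtain ⟨f', rfl⟩ := hμ G f
  obtain ⟨g', rfl⟩ := hμ G g
  have hle : Subgroup.closure (μ '' U) ≤ MonoidHom.eqLocus f' g' := by
    rw [Subgroup.closure_le]
    rintro _ ⟨x, hx, rfl⟩
    exact hfg x hx
  exact hle hd

theorem Ups.hom_ext {M : Type*} [Monoid M] {f g : Ups rels →* M}
    (h : ∀ a, f (sigma rels (FreeMonoid.of a)) = g (sigma rels (FreeMonoid.of a))) : f = g :=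
  Con.hom_ext (FreeMonoid.hom_eq h)

theorem sigma_of_mul_of (a b : Sym X rels) :
    sigma rels (FreeMonoid.of a * FreeMonoid.of b) =
      sigma rels (FreeMonoid.of (Sym.conj (Sym.theta a) b) * FreeMonoid.of a) :=
  (upsCon rels).eq.2 (ConGen.Rel.of _ _ ⟨a, b, rfl, rfl⟩)

theorem mu_sigma_of (a : Sym X rels) :
    mu rels (sigma rels (FreeMonoid.of a)) = PresentedGroup.of a :=
  rfl

theorem thetaTilde_comp_mu : (thetaTilde rels).comp (mu rels) = thetaBar rels :=
  Ups.hom_ext fun a => by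
    rw [MonoidHom.comp_apply, mu_sigma_of]
    exact PresentedGroup.toGroup.of _

def liftGUps {G : Type*} [Group G] (f : Ups rels →* G) : GUps rels →* G :=
  PresentedGroup.toGroup (f := fun a => f (sigma rels (FreeMonoid.of a))) (by
    rintro _ ⟨a, b, rfl⟩
    simp only [map_mul, map_inv, FreeGroup.lift_apply_of]
    rw [mul_inv_eq_one, ← map_mul, ← map_mul, ← map_mul, ← map_mul, sigma_of_mul_of])

theorem liftGUps_comp_mu {G : Type*} [Group G] (f : Ups rels →* G) :
    (liftGUps f).comp (mu rels) = f :=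
  Ups.hom_ext fun a => by
    rw [MonoidHom.comp_apply, mu_sigma_of]
    exact PresentedGroup.toGroup.of _

/-- Part of (iii) ⇒ (i) of Theorem `wdom`: if `Π̃ = 𝔘̂`, then every identity
`Y`-sequence lies in the weak dominion of `𝔘`. -/
theorem mem_WDom_of_ker_eq_UUhat (rels : Set (FreeGroup X))
    (h : (thetaTilde rels).ker = UUhat rels) :
    ∀ d ∈ MonoidHom.mker (thetaBar rels), d ∈ WDom (Ups rels) (UU rels) := by
  intro d hd
  have hmu : mu rels d ∈ UUhat rels := by
    rw [← h, MonoidHom.mem_ker, ← MonoidHom.comp_apply, thetaTilde_comp_mu]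
    exact hd
  exact mem_WDom_of_mem_closure_image (mu rels) (fun _ _ f => ⟨liftGUps f, liftGUps_comp_mu f⟩)
    (UU rels) hmu

end Wh
end

section
/- Every element of Π̃ = ker θ̃ is central in 𝒢(Υ); in particular Π̃ is an abelian subgroup of 𝒢(Υ). -/
universe u

namespace Wh

variable {X : Type u}

variable {rels : Set (FreeGroup X)}

/-!
Conjugation by `g ∈ 𝒢(Υ)` coincides with the action of `θ̃ g ∈ F`: both are homomorphisms
`𝒢(Υ) → Aut 𝒢(Υ)`, and on a generator `a` they agree because the defining relation says
`a ⬝ b ⬝ a⁻¹ = ^{θ(a)}b`. So an element of `ker θ̃` conjugates like `1 ∈ F`, i.e. trivially.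
-/

lemma Sym.conj_one (b : Sym X rels) : Sym.conj 1 b = b := by
  cases b; simp [Sym.conj]

lemma Sym.conj_mul (v w : FreeGroup X) (b : Sym X rels) :
    Sym.conj (v * w) b = Sym.conj v (Sym.conj w b) := by
  cases b; simp [Sym.conj, mul_assoc]

lemma of_mul_of (a b : Sym X rels) :
    (PresentedGroup.of a : GUps rels) * PresentedGroup.of b =
      PresentedGroup.of (Sym.conj (Sym.theta a) b) * PresentedGroup.of a := by
  have h : (QuotientGroup.mk (FreeGroup.of a * FreeGroup.of b *
      (FreeGroup.of (Sym.conj (Sym.theta a) b) * FreeGroup.of a)⁻¹) : GUps rels) = 1 :=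
    (QuotientGroup.eq_one_iff _).2 (Subgroup.subset_normalClosure ⟨a, b, rfl⟩)
  rwa [QuotientGroup.mk_mul, QuotientGroup.mk_inv, QuotientGroup.mk_mul,
    QuotientGroup.mk_mul, mul_inv_eq_one] at h

@[simp]
lemma thetaTilde_of (a : Sym X rels) :
    thetaTilde rels (PresentedGroup.of a) = Sym.theta a :=
  PresentedGroup.toGroup.of _

@[simp]
lemma actF_of (w : FreeGroup X) (a : Sym X rels) :
    actF rels w (PresentedGroup.of a) = PresentedGroup.of (Sym.conj w a) :=
  PresentedGroup.toGroup.of _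

lemma actF_one : actF rels 1 = MonoidHom.id (GUps rels) :=
  PresentedGroup.ext fun a => by simp [Sym.conj_one]

lemma actF_mul (v w : FreeGroup X) :
    actF rels (v * w) = (actF rels v).comp (actF rels w) :=
  PresentedGroup.ext fun a => by simp [Sym.conj_mul]

def actFAut (rels : Set (FreeGroup X)) : FreeGroup X →* MulAut (GUps rels) where
  toFun w := (actF rels w).toMulEquiv (actF rels w⁻¹)
    (by rw [← actF_mul, inv_mul_cancel, actF_one])
    (by rw [← actF_mul, mul_inv_cancel, actF_one])
  map_one' := MulEquiv.ext fun x => by simp [actF_one]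
  map_mul' v w := MulEquiv.ext fun x => by simp [actF_mul]

lemma actF_theta (a : Sym X rels) :
    actF rels (Sym.theta a) = (MulAut.conj (PresentedGroup.of a : GUps rels)).toMonoidHom :=
  PresentedGroup.ext fun b => by
    rw [actF_of, MulEquiv.coe_toMonoidHom, MulAut.conj_apply, of_mul_of, mul_inv_cancel_right]

lemma actFAut_comp_thetaTilde : (actFAut rels).comp (thetaTilde rels) = MulAut.conj :=
  PresentedGroup.ext fun a => MulEquiv.ext fun x => by
    simp [actFAut, actF_theta]

/-- Every element of `Π̃ = ker θ̃` is central in `𝒢(Υ)`; in particular `Π̃` is an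
abelian subgroup of `𝒢(Υ)`. -/
theorem ker_thetaTilde_central (rels : Set (FreeGroup X)) :
    (∀ d ∈ (thetaTilde rels).ker, ∀ x : GUps rels, d * x = x * d) ∧
    (∀ d ∈ (thetaTilde rels).ker, ∀ d' ∈ (thetaTilde rels).ker, d * d' = d' * d) := by
  have central (d : GUps rels) (hd : d ∈ (thetaTilde rels).ker) (x : GUps rels) :
      d * x = x * d := by
    have h := DFunLike.congr_fun (DFunLike.congr_fun actFAut_comp_thetaTilde d) x
    rw [MonoidHom.comp_apply, MonoidHom.mem_ker.1 hd, map_one, MulAut.one_apply,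
      MulAut.conj_apply] at h
    exact (eq_mul_inv_iff_mul_eq.1 h).symm
  exact ⟨central, fun d hd d' _ => central d hd d'⟩

end Wh
end
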